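/- For every bipartite graph G without isolated vertices there exists a bipartite graph G' without isolated vertices with ν(G') = ν(G) + 4 vertices and ι_m(G') = ι_m(G) + 2 maximal independent sets. -/

import Mathlib

/-- `s` is an independent set of vertices in `G`. -/
def IsIndep {V : Type*} (G : SimpleGraph V) (s : Finset V) : Prop :=
  ∀ u ∈ s, ∀ v ∈ s, ¬ G.Adj u v

/-- `s` is a maximal independent set in `G`. -/
def IsMaxIndep {V : Type*} (G : SimpleGraph V) (s : Finset V) : Prop :=
  IsIndep G s ∧ ∀ t : Finset V, IsIndep G t → s ⊆ t → s = t

/-- `ι G`: the number of independent sets of `G` (including `∅`). -/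
noncomputable def iota {V : Type*} [Fintype V] (G : SimpleGraph V) : ℕ :=
  Nat.card {s : Finset V // IsIndep G s}

/-- `ι_m G`: the number of maximal independent sets of `G`. -/
noncomputable def iotaM {V : Type*} [Fintype V] (G : SimpleGraph V) : ℕ :=
  Nat.card {s : Finset V // IsMaxIndep G s}

/-- `(L, R)` is a bipartition of `G`. -/
def IsBipartition {V : Type*} (G : SimpleGraph V) (L R : Finset V) : Prop :=
  Disjoint L R ∧ (∀ v : V, v ∈ L ∨ v ∈ R) ∧
    ∀ u v : V, G.Adj u v → (u ∈ L ∧ v ∈ R) ∨ (u ∈ R ∧ v ∈ L)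

/-- `G` is bipartite. -/
def IsBipartite {V : Type*} (G : SimpleGraph V) : Prop :=
  ∃ L R : Finset V, IsBipartition G L R

/-- `G` has no isolated vertices. -/
def NoIsolated {V : Type*} (G : SimpleGraph V) : Prop :=
  ∀ v : V, ∃ u : V, G.Adj v u

/-!
Attach the path `0 - 1 - 2 - 3` to `G` and join `0` and `2` to every vertex of one side `L` of a
bipartition `(L, R)`; the result is bipartite with sides `L ∪ {1, 3}` and `R ∪ {0, 2}`. A maximal
independent set meeting `{0, 2}` avoids `L`, so it contains all of `R`, and on the path it is a
maximal independent set meeting `{0, 2}`: `{0, 2}` or `{0, 3}`. A maximal independent set avoiding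
`{0, 2}` must contain `1` and `3`; since `1` already dominates `0` and `2`, its trace on `G` is an
arbitrary maximal independent set of `G`. Hence `ι_m` grows by exactly `2`.
-/

open Finset
open SimpleGraph (pathGraph pathGraph_adj)

section

variable {V W : Type*}

def IsDominating (G : SimpleGraph V) (s : Finset V) : Prop :=
  ∀ v ∉ s, ∃ u ∈ s, G.Adj v u

theorem isMaxIndep_iff_isIndep_and_isDominating (G : SimpleGraph V) (s : Finset V) :
    IsMaxIndep G s ↔ IsIndep G s ∧ IsDominating G s := by
  classical
  refine ⟨fun ⟨hind, hmax⟩ => ⟨hind, fun v hv => ?_⟩,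
    fun ⟨hind, hdom⟩ => ⟨hind, fun t ht hst => ?_⟩⟩
  · by_contra! hv'
    have hins : IsIndep G (insert v s) := by
      simp only [IsIndep, forall_mem_insert, G.irrefl, not_false_eq_true, true_and]
      exact ⟨hv', fun u hu => ⟨fun h => hv' u hu h.symm, hind u hu⟩⟩
    exact hv (hmax _ hins (subset_insert v s) ▸ mem_insert_self v s)
  · refine Subset.antisymm hst fun v hvt => ?_
    by_contra hvs
    obtain ⟨u, hus, hadj⟩ := hdom v hvs
    exact ht v hvt u (hst hus) hadj

instance (G : SimpleGraph V) [DecidableRel G.Adj] : DecidablePred (IsIndep G) :=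
  fun s => inferInstanceAs (Decidable (∀ u ∈ s, ∀ v ∈ s, ¬ G.Adj u v))

instance [Fintype V] [DecidableEq V] (G : SimpleGraph V) [DecidableRel G.Adj] :
    DecidablePred (IsDominating G) :=
  fun s => inferInstanceAs (Decidable (∀ v ∉ s, ∃ u ∈ s, G.Adj v u))

instance [Fintype V] [DecidableEq V] (G : SimpleGraph V) [DecidableRel G.Adj] :
    DecidablePred (IsMaxIndep G) :=
  fun s => decidable_of_iff _ (isMaxIndep_iff_isIndep_and_isDominating G s).symm

instance (n : ℕ) : DecidableRel (pathGraph n).Adj :=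
  fun _ _ => decidable_of_iff _ pathGraph_adj.symm

def glue (G : SimpleGraph V) (L : Finset V) (H : SimpleGraph W) (U : Finset W) :
    SimpleGraph (V ⊕ W) where
  Adj x y := match x, y with
    | .inl u, .inl v => G.Adj u v
    | .inl u, .inr w => u ∈ L ∧ w ∈ U
    | .inr w, .inl u => u ∈ L ∧ w ∈ U
    | .inr w, .inr x => H.Adj w x
  symm := by
    constructor
    rintro (u | w) (v | x) h
    exacts [h.symm, h, h, h.symm]
  loopless := by
    constructor
    rintro (u | w) h
    exacts [G.irrefl h, H.irrefl h]

theorem IsBipartition.isIndep_right {G : SimpleGraph V} {L R : Finset V}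
    (h : IsBipartition G L R) : IsIndep G R := fun u hu v hv huv => by
  rcases h.2.2 u v huv with ⟨huL, -⟩ | ⟨-, hvL⟩
  exacts [disjoint_left.1 h.1 huL hu, disjoint_left.1 h.1 hvL hv]

section glue

variable {G : SimpleGraph V} {L R : Finset V} {H : SimpleGraph W} {U : Finset W}
  {A : Finset V} {B : Finset W}

@[simp] theorem glue_adj_inl_inl {u v : V} : (glue G L H U).Adj (.inl u) (.inl v) ↔ G.Adj u v :=
  Iff.rfl

@[simp] theorem glue_adj_inl_inr {u : V} {w : W} :
    (glue G L H U).Adj (.inl u) (.inr w) ↔ u ∈ L ∧ w ∈ U := Iff.rfl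

@[simp] theorem glue_adj_inr_inl {u : V} {w : W} :
    (glue G L H U).Adj (.inr w) (.inl u) ↔ u ∈ L ∧ w ∈ U := Iff.rfl

@[simp] theorem glue_adj_inr_inr {w x : W} : (glue G L H U).Adj (.inr w) (.inr x) ↔ H.Adj w x :=
  Iff.rfl

theorem isIndep_glue_disjSum :
    IsIndep (glue G L H U) (A.disjSum B) ↔
      IsIndep G A ∧ IsIndep H B ∧ (Disjoint A L ∨ Disjoint B U) := by
  simp only [IsIndep, Sum.forall, inl_mem_disjSum, inr_mem_disjSum, glue_adj_inl_inl,
    glue_adj_inl_inr, glue_adj_inr_inl, glue_adj_inr_inr, not_and, disjoint_left]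
  grind

theorem isDominating_glue_disjSum :
    IsDominating (glue G L H U) (A.disjSum B) ↔
      (∀ v ∉ A, (∃ u ∈ A, G.Adj v u) ∨ v ∈ L ∧ ¬ Disjoint B U) ∧
      (∀ w ∉ B, (∃ x ∈ B, H.Adj w x) ∨ w ∈ U ∧ ¬ Disjoint A L) := by
  simp only [IsDominating, Sum.forall, Sum.exists, inl_mem_disjSum, inr_mem_disjSum,
    glue_adj_inl_inl, glue_adj_inl_inr, glue_adj_inr_inl, glue_adj_inr_inr, disjoint_left,
    not_forall, not_not]
  grind

theorem IsBipartition.glue {L' R' : Finset W} (hG : IsBipartition G L R)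
    (hH : IsBipartition H L' R') (hU : U ⊆ R') :
    IsBipartition (glue G L H U) (L.disjSum L') (R.disjSum R') := by
  obtain ⟨hGdisj, hGcov, hGedge⟩ := hG
  obtain ⟨hHdisj, hHcov, hHedge⟩ := hH
  refine ⟨?_, ?_, ?_⟩
  · rw [disjoint_left]
    rintro (v | w) <;> simp only [inl_mem_disjSum, inr_mem_disjSum]
    exacts [fun h => disjoint_left.1 hGdisj h, fun h => disjoint_left.1 hHdisj h]
  · rintro (v | w) <;> simp only [inl_mem_disjSum, inr_mem_disjSum]
    exacts [hGcov v, hHcov w]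
  · rintro (u | w) (v | x) h
    · simpa using hGedge u v h
    · simp [h.1, hU h.2]
    · simp [h.1, hU h.2]
    · simpa using hHedge w x h

theorem NoIsolated.glue (hG : NoIsolated G) (hH : NoIsolated H) : NoIsolated (glue G L H U) := by
  rintro (v | w)
  · obtain ⟨u, hu⟩ := hG v
    exact ⟨.inl u, hu⟩
  · obtain ⟨x, hx⟩ := hH w
    exact ⟨.inr x, hx⟩

theorem isMaxIndep_glue_disjSum_of_not_disjoint (hLR : IsBipartition G L R)
    (hB : ¬ Disjoint B U) :
    IsMaxIndep (glue G L H U) (A.disjSum B) ↔ A = R ∧ IsMaxIndep H B := by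
  obtain ⟨hdisj, hcov, hedge⟩ := hLR
  simp only [isMaxIndep_iff_isIndep_and_isDominating, isIndep_glue_disjSum,
    isDominating_glue_disjSum]
  constructor
  · rintro ⟨⟨-, hBind, hAL | hBU⟩, hAdom, hBdom⟩
    swap
    · exact absurd hBU hB
    refine ⟨?_, hBind, fun w hw => (hBdom w hw).resolve_right fun h => h.2 hAL⟩
    ext v
    refine ⟨fun hv => (hcov v).resolve_left (disjoint_left.1 hAL hv), fun hvR => ?_⟩
    by_contra hvA
    rcases hAdom v hvA with ⟨u, huA, hvu⟩ | ⟨hvL, -⟩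
    · rcases hedge v u hvu with ⟨hvL, -⟩ | ⟨-, huL⟩
      exacts [disjoint_left.1 hdisj hvL hvR, disjoint_left.1 hAL huA huL]
    · exact disjoint_left.1 hdisj hvL hvR
  · rintro ⟨rfl, hBind, hBdom⟩
    exact ⟨⟨IsBipartition.isIndep_right ⟨hdisj, hcov, hedge⟩, hBind, .inl hdisj.symm⟩,
      fun v hv => .inr ⟨(hcov v).resolve_right hv, hB⟩, fun w hw => .inl (hBdom w hw)⟩

theorem isMaxIndep_glue_disjSum_of_disjoint (hB : Disjoint B U) :
    IsMaxIndep (glue G L H U) (A.disjSum B) ↔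
      IsMaxIndep G A ∧ IsIndep H B ∧ ∀ w ∉ B, (∃ x ∈ B, H.Adj w x) ∨ w ∈ U ∧ ¬ Disjoint A L := by
  simp only [isMaxIndep_iff_isIndep_and_isDominating, isIndep_glue_disjSum,
    isDominating_glue_disjSum, hB, not_true_eq_false, and_false, or_false, or_true,
    and_true]
  tauto

end glue

theorem pathGraph_four_isMaxIndep_iff_of_not_disjoint {B : Finset (Fin 4)}
    (hB : ¬ Disjoint B {0, 2}) :
    IsMaxIndep (pathGraph 4) B ↔ B = {0, 2} ∨ B = {0, 3} := by
  revert B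
  decide

theorem pathGraph_four_isIndep_and_dominating_iff_of_disjoint {B : Finset (Fin 4)} (hB : Disjoint B {0, 2}) (c : Prop) :
    (IsIndep (pathGraph 4) B ∧
      ∀ w ∉ B, (∃ x ∈ B, (pathGraph 4).Adj w x) ∨ w ∈ ({0, 2} : Finset (Fin 4)) ∧ c) ↔
      B = {1, 3} := by
  by_cases hc : c <;> simp only [hc, and_true, and_false, or_false] <;> revert B <;> decide

theorem isMaxIndep_glue_pathGraph_four_iff {G : SimpleGraph V} {L R : Finset V}
    (hLR : IsBipartition G L R) (S : Finset (V ⊕ Fin 4)) :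
    IsMaxIndep (glue G L (pathGraph 4) {0, 2}) S ↔
      (S.toLeft = R ∧ (S.toRight = {0, 2} ∨ S.toRight = {0, 3})) ∨
      (IsMaxIndep G S.toLeft ∧ S.toRight = {1, 3}) := by
  rw [← toLeft_disjSum_toRight (u := S)]
  simp only [toLeft_disjSum, toRight_disjSum]
  by_cases hB : Disjoint S.toRight {0, 2}
  · rw [isMaxIndep_glue_disjSum_of_disjoint hB, pathGraph_four_isIndep_and_dominating_iff_of_disjoint hB]
    have : S.toRight ≠ {0, 2} ∧ S.toRight ≠ {0, 3} := by
      constructor <;> rintro h <;> rw [h] at hB <;> exact absurd hB (by decide)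
    tauto
  · rw [isMaxIndep_glue_disjSum_of_not_disjoint hLR hB,
      pathGraph_four_isMaxIndep_iff_of_not_disjoint hB]
    have : S.toRight ≠ {1, 3} := by rintro h; rw [h] at hB; exact hB (by decide)
    tauto

theorem iotaM_glue_pathGraph_four [Fintype V] {G : SimpleGraph V} {L R : Finset V}
    (hLR : IsBipartition G L R) :
    iotaM (glue G L (pathGraph 4) {0, 2}) = iotaM G + 2 := by
  have hchar := isMaxIndep_glue_pathGraph_four_iff hLR
  let f : {T // IsMaxIndep G T} ⊕ Fin 2 →
      {S // IsMaxIndep (glue G L (pathGraph 4) {0, 2}) S} :=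
    Sum.elim (fun T => ⟨T.1.disjSum {1, 3}, (hchar _).2 (.inr ⟨by simpa using T.2, by simp⟩)⟩)
      (fun i => ⟨R.disjSum (![{0, 2}, {0, 3}] i),
        (hchar _).2 (.inl ⟨by simp, by fin_cases i <;> simp⟩)⟩)
  have hf : Function.Bijective f := by
    refine ⟨?_, fun ⟨S, hS⟩ => ?_⟩
    · have hinj : Function.Injective (![{0, 2}, {0, 3}] : Fin 2 → Finset (Fin 4)) := by decide
      rintro (T | i) (T' | j) h <;> simp only [f, Sum.elim_inl, Sum.elim_inr, Subtype.mk.injEq,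
        disjSum_inj] at h
      · exact congrArg Sum.inl (Subtype.ext h.1)
      · exact absurd h.2 (by fin_cases j <;> decide)
      · exact absurd h.2 (by fin_cases i <;> decide)
      · exact congrArg Sum.inr (hinj h.2)
    · rcases (hchar S).1 hS with ⟨hA, hB | hB⟩ | ⟨hT, hB⟩
      · exact ⟨.inr 0, Subtype.ext (eq_disjSum_iff.2 ⟨hA, hB⟩).symm⟩
      · exact ⟨.inr 1, Subtype.ext (eq_disjSum_iff.2 ⟨hA, hB⟩).symm⟩
      · exact ⟨.inl ⟨_, hT⟩, Subtype.ext (eq_disjSum_iff.2 ⟨rfl, hB⟩).symm⟩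
  rw [iotaM, iotaM, ← Nat.card_congr (Equiv.ofBijective f hf), Nat.card_sum, Nat.card_fin]

section iso

variable {G : SimpleGraph V} {G' : SimpleGraph W}

theorem IsBipartite.of_iso (e : G ≃g G') (h : IsBipartite G) : IsBipartite G' := by
  obtain ⟨L, R, hdisj, hcov, hedge⟩ := h
  have hmem (A : Finset V) (w : W) : w ∈ A.map e.toEquiv.toEmbedding ↔ e.symm w ∈ A :=
    mem_map_equiv
  refine ⟨L.map e.toEquiv.toEmbedding, R.map e.toEquiv.toEmbedding, (disjoint_map _).2 hdisj,
    fun v => ?_, fun u v huv => ?_⟩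
  · simpa only [hmem] using hcov (e.symm v)
  · simpa only [hmem] using hedge _ _ (e.symm.map_adj_iff.2 huv)

theorem NoIsolated.of_iso (e : G ≃g G') (h : NoIsolated G) : NoIsolated G' := by
  intro v
  obtain ⟨u, hu⟩ := h (e.symm v)
  exact ⟨e u, by simpa using e.map_adj_iff.2 hu⟩

theorem isIndep_map_iso (e : G ≃g G') (s : Finset V) :
    IsIndep G' (s.map e.toEquiv.toEmbedding) ↔ IsIndep G s := by
  simp only [IsIndep, forall_mem_map, Equiv.coe_toEmbedding, RelIso.coe_fn_toEquiv,
    SimpleGraph.Iso.map_adj_iff]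

theorem isDominating_map_iso (e : G ≃g G') (s : Finset V) :
    IsDominating G' (s.map e.toEquiv.toEmbedding) ↔ IsDominating G s := by
  refine (e.toEquiv.forall_congr fun v => ?_).symm
  simp only [mem_map, Equiv.coe_toEmbedding, RelIso.coe_fn_toEquiv, e.injective.eq_iff,
    exists_eq_right, exists_exists_and_eq_and, SimpleGraph.Iso.map_adj_iff]

theorem iotaM_eq_of_iso [Fintype V] [Fintype W] (e : G ≃g G') : iotaM G = iotaM G' :=
  Nat.card_congr <| e.toEquiv.finsetCongr.subtypeEquiv fun s => by
    simp only [Equiv.finsetCongr_apply, isMaxIndep_iff_isIndep_and_isDominating, isIndep_map_iso,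
      isDominating_map_iso]

end iso

end

/-- For every bipartite graph `G` without isolated vertices there is a bipartite
graph `G'` without isolated vertices with `ν(G) + 4` vertices and `ι_m(G) + 2`
maximal independent sets. -/
theorem stmt_12 {V : Type*} [Fintype V] (G : SimpleGraph V)
    (hbip : IsBipartite G) (hiso : NoIsolated G) :
    ∃ (W : Type) (_ : Fintype W) (G' : SimpleGraph W),
      IsBipartite G' ∧ NoIsolated G' ∧
      Fintype.card W = Fintype.card V + 4 ∧ iotaM G' = iotaM G + 2 := by
  obtain ⟨L, R, hLR⟩ := hbip
  have hP : IsBipartition (pathGraph 4) {1, 3} {0, 2} := by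
    unfold IsBipartition; decide
  have hPiso : NoIsolated (pathGraph 4) := by unfold NoIsolated; decide
  let G₄ := glue G L (pathGraph 4) {0, 2}
  let e := SimpleGraph.Iso.comap (Fintype.equivFin (V ⊕ Fin 4)).symm G₄
  refine ⟨_, inferInstance, _, IsBipartite.of_iso e.symm ⟨_, _, hLR.glue hP subset_rfl⟩,
    (hiso.glue hPiso).of_iso e.symm, by simp, ?_⟩
  rw [← iotaM_eq_of_iso e.symm, iotaM_glue_pathGraph_four hLR]
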